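/- In the setting of Lemma 3, Σ_{p(m̄,m̃)} Π_{ab} binomial(m̄_{ab}, p_{a0b}) = Π_a binomial(l_a, m̃_{a0}) and Σ_{p(m̄,m̃)} Π_{ab} binomial(m̃_{ab}, p_{0ba}) = Π_b binomial(l_b, m̄_{0b}). -/

import Mathlib

open Finset

/-- 2x2x2 nonnegative integer cubes `p` (entries bounded by `n`) whose projections
along two of the axes are the prescribed squares `mbar` and `mtil`:
`Σ_c p_{acb} = mbar_{ab}` and `Σ_c p_{cba} = mtil_{ab}`. -/
def cubes (n : ℕ) (mbar mtil : Fin 2 → Fin 2 → ℕ) :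
    Finset (Fin 2 → Fin 2 → Fin 2 → ℕ) :=
  (Fintype.piFinset fun _ : Fin 2 => Fintype.piFinset fun _ : Fin 2 =>
      Fintype.piFinset fun _ : Fin 2 => Finset.range (n + 1)).filter
    (fun p => ∀ a b : Fin 2,
      p a 0 b + p a 1 b = mbar a b ∧ p 0 b a + p 1 b a = mtil a b)

private lemma mem_cubes {n : ℕ} {mbar mtil : Fin 2 → Fin 2 → ℕ}
    {p : Fin 2 → Fin 2 → Fin 2 → ℕ} :
    p ∈ cubes n mbar mtil ↔ (∀ a c b : Fin 2, p a c b ≤ n) ∧ ∀ a b : Fin 2,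
      p a 0 b + p a 1 b = mbar a b ∧ p 0 b a + p 1 b a = mtil a b := by
  simp [cubes, Fintype.mem_piFinset, Nat.lt_succ_iff]

private lemma key (n : ℕ) (mbar mtil : Fin 2 → Fin 2 → ℕ)
    (hbound : ∀ a b, mbar a b ≤ n)
    (hcol : ∀ a, mbar 0 a + mbar 1 a = mtil a 0 + mtil a 1) :
    (∑ p ∈ cubes n mbar mtil, ∏ a : Fin 2, ∏ b : Fin 2,
        Nat.choose (mbar a b) (p a 0 b))
      = ∏ a : Fin 2, Nat.choose (mbar 0 a + mbar 1 a) (mtil a 0) := by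
  have step1 : (∑ p ∈ cubes n mbar mtil, ∏ a : Fin 2, ∏ b : Fin 2,
        Nat.choose (mbar a b) (p a 0 b))
      = ∑ x ∈ ((antidiagonal (mtil 0 0)) ×ˢ (antidiagonal (mtil 1 0))).filter
          (fun x => x.1.1 ≤ mbar 0 0 ∧ x.1.2 ≤ mbar 1 0 ∧ x.2.1 ≤ mbar 0 1 ∧
            x.2.2 ≤ mbar 1 1),
          (Nat.choose (mbar 0 0) x.1.1 * Nat.choose (mbar 1 0) x.1.2) *
          (Nat.choose (mbar 0 1) x.2.1 * Nat.choose (mbar 1 1) x.2.2) := by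
    refine Finset.sum_nbij' (fun p => ((p 0 0 0, p 1 0 0), (p 0 0 1, p 1 0 1)))
      (fun x => fun a c b => if c = 0 then (if b = 0 then (if a = 0 then x.1.1 else x.1.2)
          else (if a = 0 then x.2.1 else x.2.2))
        else mbar a b - (if b = 0 then (if a = 0 then x.1.1 else x.1.2)
          else (if a = 0 then x.2.1 else x.2.2))) ?_ ?_ ?_ ?_ ?_
    · intro p hp
      rw [mem_cubes] at hp
      have h1 := (hp.2 0 0).2
      have h2 := (hp.2 1 0).2
      have h3 := (hp.2 0 0).1
      have h4 := (hp.2 0 1).1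
      have h5 := (hp.2 1 0).1
      have h6 := (hp.2 1 1).1
      simp only [mem_filter, mem_product, Finset.HasAntidiagonal.mem_antidiagonal]
      refine ⟨⟨?_, ?_⟩, ?_, ?_, ?_, ?_⟩ <;> omega
    · intro x hx
      simp only [mem_filter, mem_product, Finset.HasAntidiagonal.mem_antidiagonal] at hx
      obtain ⟨⟨h1, h2⟩, h3, h4, h5, h6⟩ := hx
      rw [mem_cubes]
      have hc0 := hcol 0
      have hc1 := hcol 1
      constructor
      · intro a c b
        have hb00 := hbound 0 0
        have hb01 := hbound 0 1
        have hb10 := hbound 1 0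
        have hb11 := hbound 1 1
        fin_cases a <;> fin_cases c <;> fin_cases b <;> simp <;> omega
      · intro a b
        fin_cases a <;> fin_cases b <;> simp <;> omega
    · intro p hp
      rw [mem_cubes] at hp
      have e00 := (hp.2 0 0).1
      have e01 := (hp.2 0 1).1
      have e10 := (hp.2 1 0).1
      have e11 := (hp.2 1 1).1
      funext a c b
      fin_cases a <;> fin_cases c <;> fin_cases b <;> simp <;> omega
    · intro x hx
      simp
    · intro p hp
      rw [mem_cubes] at hp
      simp [Fin.prod_univ_two]
      ring
  rw [step1, Finset.sum_filter_of_ne]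
  · rw [Fin.prod_univ_two, Nat.add_choose_eq, Nat.add_choose_eq, Finset.sum_mul_sum,
      ← Finset.sum_product']
  intro x hx hne
  clear step1
  have c1 : ¬ mbar 0 0 < x.1.1 := fun h => hne (by simp [Nat.choose_eq_zero_of_lt h])
  have c2 : ¬ mbar 1 0 < x.1.2 := fun h => hne (by simp [Nat.choose_eq_zero_of_lt h])
  have c3 : ¬ mbar 0 1 < x.2.1 := fun h => hne (by simp [Nat.choose_eq_zero_of_lt h])
  have c4 : ¬ mbar 1 1 < x.2.2 := fun h => hne (by simp [Nat.choose_eq_zero_of_lt h])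
  exact ⟨by omega, by omega, by omega, by omega⟩

/-- The two halves of the proof of Lemma 3:
`Σ_{p(m̄,m̃)} Π_{ab} C(m̄_{ab}, p_{a0b}) = Π_a C(l_a, m̃_{a0})` and
`Σ_{p(m̄,m̃)} Π_{ab} C(m̃_{ab}, p_{0ba}) = Π_b C(l_b, m̄_{0b})`. -/
theorem stmt_10 (n : ℕ) (k l lt : Fin 2 → ℕ)
    (hk : k 0 + k 1 = n) (hl : l 0 + l 1 = n) (hlt : lt 0 + lt 1 = n)
    (mbar mtil : Fin 2 → Fin 2 → ℕ)
    (hbarrow : ∀ a, mbar a 0 + mbar a 1 = k a)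
    (hbarcol : ∀ b, mbar 0 b + mbar 1 b = l b)
    (htilrow : ∀ a, mtil a 0 + mtil a 1 = l a)
    (htilcol : ∀ b, mtil 0 b + mtil 1 b = lt b) :
    (∑ p ∈ cubes n mbar mtil, ∏ a : Fin 2, ∏ b : Fin 2,
        Nat.choose (mbar a b) (p a 0 b))
      = (∏ a : Fin 2, Nat.choose (l a) (mtil a 0)) ∧
    (∑ p ∈ cubes n mbar mtil, ∏ a : Fin 2, ∏ b : Fin 2,
        Nat.choose (mtil a b) (p 0 b a))
      = (∏ b : Fin 2, Nat.choose (l b) (mbar 0 b)) := by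
  constructor
  · have hb : ∀ a b, mbar a b ≤ n := by
      intro a b
      have h0 := hbarrow 0; have h1 := hbarrow 1
      fin_cases a <;> fin_cases b <;> simp only [Fin.zero_eta, Fin.mk_one] <;> omega
    have hc : ∀ a, mbar 0 a + mbar 1 a = mtil a 0 + mtil a 1 := by
      intro a; rw [hbarcol a, htilrow a]
    rw [key n mbar mtil hb hc]
    exact Finset.prod_congr rfl fun a _ => by rw [hbarcol a]
  · have hb' : ∀ a b : Fin 2, (fun a b => mtil b a) a b ≤ n := by
      intro a b
      show mtil b a ≤ n
      have h0 := htilrow 0; have h1 := htilrow 1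
      fin_cases a <;> fin_cases b <;> simp only [Fin.zero_eta, Fin.mk_one] <;> omega
    have hc' : ∀ a, (fun a b => mtil b a) 0 a + (fun a b => mtil b a) 1 a
        = (fun a b => mbar b a) a 0 + (fun a b => mbar b a) a 1 := by
      intro a
      show mtil a 0 + mtil a 1 = mbar 0 a + mbar 1 a
      rw [htilrow a, hbarcol a]
    have hswap : (∑ p ∈ cubes n mbar mtil, ∏ a : Fin 2, ∏ b : Fin 2,
        Nat.choose (mtil a b) (p 0 b a))
        = ∑ p ∈ cubes n (fun a b => mtil b a) (fun a b => mbar b a),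
            ∏ a : Fin 2, ∏ b : Fin 2, Nat.choose ((fun a b => mtil b a) a b) (p a 0 b) := by
      refine Finset.sum_nbij' (fun p => fun a c b => p c a b) (fun p => fun a c b => p c a b)
        ?_ ?_ ?_ ?_ ?_
      · intro p hp
        rw [mem_cubes] at hp ⊢
        exact ⟨fun a c b => hp.1 c a b, fun a b => ⟨(hp.2 b a).2, (hp.2 b a).1⟩⟩
      · intro p hp
        rw [mem_cubes] at hp ⊢
        exact ⟨fun a c b => hp.1 c a b, fun a b => ⟨(hp.2 b a).2, (hp.2 b a).1⟩⟩
      · intro p _; rfl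
      · intro p _; rfl
      · intro p _
        rw [Finset.prod_comm]
    rw [hswap, key n (fun a b => mtil b a) (fun a b => mbar b a) hb' hc']
    refine Finset.prod_congr rfl fun a _ => ?_
    show (mtil a 0 + mtil a 1).choose (mbar 0 a) = (l a).choose (mbar 0 a)
    rw [htilrow a]
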